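/- Fix $\boldsymbol{\lambda}\in\mathbb{Z}_{\ge 0}^N$ with $|\boldsymbol{\lambda}|=n$ and suppose $\sum_{1\le i<j\le N}\lambda_i\lambda_j>0$. Then $\sum_{I\in\mathcal{I}_{\boldsymbol{\lambda}}} \frac{1}{R(I)} = 0$ as a rational function in $z_1,\dots,z_n$, where $\mathcal{I}_{\boldsymbol{\lambda}}$ is the set of decompositions $I=(I_1,\dots,I_N)$ of $\{1,\dots,n\}$ with $|I_i|=\lambda_i$, and $R(I)=\prod_{i<j}\prod_{a\in I_i,\,b\in I_j}(z_b-z_a)$. -/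

import Mathlib

/-!
Multiplying `R(I)` by the cofactor `C(I)` (`Rcofactor`), the product of `z_b - z_a` over pairs
`a < b` in the same block times a sign for every inverted pair, gives the Vandermonde product `Δ`
(`vandermondePoly`). Hence `∑ 1/R(I) = (∑ C(I)) / Δ`. The numerator changes sign under every
transposition of the variables, since the set of decompositions is permutation invariant and `Δ`
is alternating, and its degree is below `deg Δ = n(n-1)/2` as soon as some pair lies in different
blocks. A monomial of such low degree has two equal exponents, so its coefficient in an
alternating polynomial is its own negative, and the numerator vanishes.
-/

open Finset MvPolynomial

/-- `R(I) = ∏_{i<j} ∏_{a ∈ I_i, b ∈ I_j} (z_b - z_a)` for the decomposition of `{1,…,n}`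
encoded by `f : Fin n → Fin N` (with `I_j = f⁻¹(j)`). -/
noncomputable def Rpoly (N n : ℕ) (f : Fin n → Fin N) : MvPolynomial (Fin n) ℂ :=
  ∏ p ∈ univ.filter (fun p : Fin n × Fin n => f p.1 < f p.2), (X p.2 - X p.1)

lemma Fintype.choose_card_two_le_sum_of_injective {σ : Type*} [Fintype σ] {m : σ → ℕ}
    (hm : Function.Injective m) : (Fintype.card σ).choose 2 ≤ ∑ i, m i := by
  classical
  set s : Finset ℤ := univ.image fun i => (m i : ℤ)
  have hs : #s = Fintype.card σ := card_image_of_injective _ (Nat.cast_injective.comp hm)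
  have key := Finset.sum_range_le_sum (s := s) (c := 0) (by simp [s])
  rw [hs, sum_image fun i _ j _ h => hm (Nat.cast_injective h)] at key
  rw [Nat.choose_two_right, ← Finset.sum_range_id, ← Nat.cast_le (α := ℤ)]
  push_cast
  simpa using key

theorem MvPolynomial.eq_zero_of_rename_swap_eq_neg {R σ : Type*} [CommRing R] [NoZeroDivisors R]
    [CharZero R] [Fintype σ] [DecidableEq σ] {P : MvPolynomial σ R}
    (hP : ∀ a b, a ≠ b → rename (Equiv.swap a b) P = -P)
    (hdeg : P.totalDegree < (Fintype.card σ).choose 2) : P = 0 := by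
  ext m
  rw [coeff_zero]
  by_contra hm
  obtain ⟨a, b, hab, hmab⟩ : ∃ a b, a ≠ b ∧ m a = m b := by
    by_contra! hinj
    have hsum : ∑ i, m i ≤ P.totalDegree := by
      simpa [Finsupp.sum_fintype] using le_totalDegree (mem_support_iff.mpr hm)
    have hchoose :=
      Fintype.choose_card_two_le_sum_of_injective fun x y h => not_imp_not.mp (hinj x y) h
    omega
  have hfix : m.mapDomain (Equiv.swap a b) = m := by
    ext c
    rw [← Finsupp.equivMapDomain_eq_mapDomain, Finsupp.equivMapDomain_apply, Equiv.symm_swap]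
    rcases eq_or_ne c a with rfl | hca
    · simp [hmab]
    rcases eq_or_ne c b with rfl | hcb
    · simp [hmab]
    · rw [Equiv.swap_apply_of_ne_of_ne hca hcb]
  have hneg := coeff_rename_mapDomain _ (Equiv.swap a b).injective P m
  rw [hfix, hP a b hab, coeff_neg, neg_eq_iff_add_eq_zero, add_self_eq_zero] at hneg
  exact hm hneg

lemma Finset.prod_univ_eq_prod_filter_lt_mul_swap {α M : Type*} [Fintype α] [LinearOrder α]
    [CommMonoid M] (g : α × α → M) (hg : ∀ a, g (a, a) = 1) :
    ∏ p, g p = ∏ p ∈ univ.filter (fun p : α × α => p.1 < p.2), g p * g p.swap := by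
  rw [prod_mul_distrib, ← prod_filter_mul_prod_filter_not univ (fun p : α × α => p.1 < p.2)]
  congr 1
  rw [← prod_filter_mul_prod_filter_not _ (fun p : α × α => p.2 < p.1), filter_filter,
    prod_eq_one (s := filter _ (filter _ _)) fun p hp => ?_, mul_one]
  · exact prod_nbij' Prod.swap Prod.swap (by simp) (by simp +contextual [le_of_lt])
      (by simp) (by simp) (by simp)
  · obtain ⟨a, b⟩ := p
    simp only [mem_filter, mem_univ, true_and, not_lt] at hp
    rw [le_antisymm hp.1 hp.2]
    exact hg a

section Vandermonde

variable (R : Type*) [CommRing R] (n : ℕ)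

noncomputable def vandermondePoly : MvPolynomial (Fin n) R :=
  ∏ p ∈ univ.filter (fun p : Fin n × Fin n => p.1 < p.2), (X p.2 - X p.1)

lemma vandermondePoly_eq_det :
    vandermondePoly R n = (Matrix.vandermonde (X : Fin n → MvPolynomial (Fin n) R)).det := by
  rw [Matrix.det_vandermonde, vandermondePoly, prod_filter, ← univ_product_univ, prod_product]
  refine prod_congr rfl fun i _ => ?_
  rw [← prod_filter]
  congr 1
  ext j
  simp

lemma rename_vandermondePoly (σ : Equiv.Perm (Fin n)) :
    rename σ (vandermondePoly R n) = (Equiv.Perm.sign σ : ℤ) • vandermondePoly R n := by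
  have hmap : (Matrix.vandermonde (X : Fin n → MvPolynomial (Fin n) R)).map (rename σ) =
      (Matrix.vandermonde X).submatrix σ id := by
    ext i j
    simp [Matrix.vandermonde]
  rw [vandermondePoly_eq_det, ← AlgHom.coe_toRingHom, RingHom.map_det, RingHom.mapMatrix_apply,
    AlgHom.coe_toRingHom, hmap, Matrix.det_permute, zsmul_eq_mul]

end Vandermonde

lemma MvPolynomial.X_sub_X_ne_zero {R σ : Type*} [CommRing R] [Nontrivial R] {a b : σ}
    (h : a ≠ b) : (X b - X a : MvPolynomial σ R) ≠ 0 :=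
  sub_ne_zero.mpr (X_injective.ne h.symm)

lemma vandermondePoly_ne_zero (R : Type*) [CommRing R] [IsDomain R] (n : ℕ) :
    vandermondePoly R n ≠ 0 :=
  prod_ne_zero_iff.mpr fun _ hp => X_sub_X_ne_zero (mem_filter.mp hp).2.ne

section Decompositions

variable {N n : ℕ}

noncomputable def Rcofactor (N n : ℕ) (f : Fin n → Fin N) : MvPolynomial (Fin n) ℂ :=
  ∏ p ∈ univ.filter (fun p : Fin n × Fin n => p.1 < p.2),
    if f p.1 = f p.2 then X p.2 - X p.1 else if f p.2 < f p.1 then -1 else 1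

lemma Rpoly_ne_zero (f : Fin n → Fin N) : Rpoly N n f ≠ 0 :=
  prod_ne_zero_iff.mpr fun p hp => X_sub_X_ne_zero fun h => by
    simp [h] at hp

lemma Rpoly_mul_Rcofactor (f : Fin n → Fin N) :
    Rpoly N n f * Rcofactor N n f = vandermondePoly ℂ n := by
  rw [Rpoly, prod_filter, prod_univ_eq_prod_filter_lt_mul_swap _ (by simp), Rcofactor,
    vandermondePoly, ← prod_mul_distrib]
  refine prod_congr rfl fun p _ => ?_
  rcases lt_trichotomy (f p.1) (f p.2) with h | h | h
  · simp [h, h.ne, h.not_gt]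
  · simp [h]
  · simp [h, h.ne', h.not_gt]

lemma rename_Rpoly (σ : Equiv.Perm (Fin n)) (f : Fin n → Fin N) :
    rename σ (Rpoly N n f) = Rpoly N n (f ∘ σ.symm) := by
  rw [Rpoly, Rpoly, map_prod]
  simp only [map_sub, rename_X]
  exact prod_equiv (σ.prodCongr σ) (by simp) (by simp)

lemma rename_Rcofactor (σ : Equiv.Perm (Fin n)) (f : Fin n → Fin N) :
    rename σ (Rcofactor N n f) = (Equiv.Perm.sign σ : ℤ) • Rcofactor N n (f ∘ σ.symm) := by
  apply mul_left_cancel₀ (Rpoly_ne_zero (f ∘ σ.symm))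
  rw [← rename_Rpoly, ← map_mul, Rpoly_mul_Rcofactor, rename_vandermondePoly, mul_smul_comm,
    rename_Rpoly, Rpoly_mul_Rcofactor]

lemma totalDegree_Rcofactor_lt {f : Fin n → Fin N} (hf : ∃ a b, f a ≠ f b) :
    (Rcofactor N n f).totalDegree < n.choose 2 := by
  obtain ⟨a, b, hab⟩ := hf
  obtain ⟨p, hp, hfp⟩ :
      ∃ p ∈ univ.filter (fun p : Fin n × Fin n => p.1 < p.2), f p.1 ≠ f p.2 := by
    rcases (ne_of_apply_ne f hab).lt_or_gt with h | h
    · exact ⟨(a, b), by simpa using h, hab⟩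
    · exact ⟨(b, a), by simpa using h, hab.symm⟩
  refine (totalDegree_finsetProd _ _).trans_lt ?_
  have hpairs : #(univ.filter fun p : Fin n × Fin n => p.1 < p.2) = n.choose 2 := by
    simpa using Fintype.card_product_filter_lt (α := Fin n)
  rw [← hpairs, card_eq_sum_ones]
  refine sum_lt_sum (fun p _ => ?_) ⟨p, hp, by
    simp only [hfp, if_false]; split_ifs <;> simp⟩
  split_ifs
  · exact (totalDegree_sub _ _).trans (by simp)
  all_goals simp

lemma inv_algebraMap_Rpoly (f : Fin n → Fin N) :
    (algebraMap _ (FractionRing (MvPolynomial (Fin n) ℂ)) (Rpoly N n f))⁻¹ =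
      algebraMap _ _ (Rcofactor N n f) / algebraMap _ _ (vandermondePoly ℂ n) := by
  have hT : Rcofactor N n f ≠ 0 :=
    right_ne_zero_of_mul (by rw [Rpoly_mul_Rcofactor]; exact vandermondePoly_ne_zero ℂ n)
  rw [← Rpoly_mul_Rcofactor, map_mul, div_mul_cancel_right₀]
  exact (IsFractionRing.injective _ _).ne_iff' (map_zero _) |>.mpr hT

lemma sum_Rcofactor_eq_zero {F : Finset (Fin n → Fin N)}
    (hF : ∀ σ : Equiv.Perm (Fin n), ∀ f ∈ F, f ∘ σ ∈ F)
    (hne : ∀ f ∈ F, ∃ a b, f a ≠ f b) :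
    ∑ f ∈ F, Rcofactor N n f = 0 := by
  rcases F.eq_empty_or_nonempty with rfl | ⟨f₀, hf₀⟩
  · exact sum_empty
  apply eq_zero_of_rename_swap_eq_neg
  · intro a b hab
    simp only [map_sum, rename_Rcofactor, Equiv.Perm.sign_swap hab, Equiv.symm_swap,
      Units.val_neg, Units.val_one, neg_smul, one_smul, sum_neg_distrib, neg_inj]
    exact sum_nbij' (· ∘ Equiv.swap a b) (· ∘ Equiv.swap a b) (fun f hf => hF _ f hf)
      (fun f hf => hF _ f hf) (fun f _ => by ext; simp) (fun f _ => by ext; simp) fun _ _ => rfl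
  · refine (totalDegree_finsetSum _ _).trans_lt ?_
    rw [Fintype.card_fin, Finset.sup_lt_iff (totalDegree_Rcofactor_lt (hne f₀ hf₀)).bot_lt]
    exact fun f hf => totalDegree_Rcofactor_lt (hne f hf)

end Decompositions

lemma card_filter_comp_perm_eq {α β : Type*} [Fintype α] [DecidableEq β] (f : α → β)
    (σ : Equiv.Perm α) (j : β) :
    #(univ.filter fun a => f (σ a) = j) = #(univ.filter fun a => f a = j) :=
  card_equiv σ (by simp)

theorem stmt2_general (N n : ℕ) (lam : Fin N → ℕ)
    (hpos : 0 < ∑ p ∈ univ.filter (fun p : Fin N × Fin N => p.1 < p.2), lam p.1 * lam p.2) :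
    ∑ f ∈ univ.filter (fun f : Fin n → Fin N =>
        ∀ j, (univ.filter fun a => f a = j).card = lam j),
      (algebraMap (MvPolynomial (Fin n) ℂ) (FractionRing (MvPolynomial (Fin n) ℂ))
        (Rpoly N n f))⁻¹ = 0 := by
  obtain ⟨⟨i, j⟩, hij, hlam⟩ := exists_ne_zero_of_sum_ne_zero hpos.ne'
  simp only [inv_algebraMap_Rpoly, ← sum_div, ← map_sum]
  rw [sum_Rcofactor_eq_zero, map_zero, zero_div]
  · intro σ f hf
    simpa [card_filter_comp_perm_eq] using hf
  · intro f hf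
    have hfib : ∀ k, lam k ≠ 0 → ∃ a, f a = k := fun k hk => by
      obtain ⟨a, ha⟩ := card_ne_zero.mp (((mem_filter.mp hf).2 k).trans_ne hk)
      exact ⟨a, (mem_filter.mp ha).2⟩
    obtain ⟨a, rfl⟩ := hfib i (left_ne_zero_of_mul hlam)
    obtain ⟨b, rfl⟩ := hfib j (right_ne_zero_of_mul hlam)
    exact ⟨a, b, (mem_filter.mp hij).2.ne⟩

/-- Atiyah–Bott localization for `∫_{F_λ} 1 = 0` on a positive-dimensional partial flag
variety: if `∑_{i<j} λ_i λ_j > 0`, then `∑_{I ∈ I_λ} 1/R(I) = 0` as a rational function. -/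
theorem stmt2 (N n : ℕ) (lam : Fin N → ℕ) (hsum : ∑ i, lam i = n)
    (hpos : 0 < ∑ p ∈ univ.filter (fun p : Fin N × Fin N => p.1 < p.2), lam p.1 * lam p.2) :
    ∑ f ∈ univ.filter (fun f : Fin n → Fin N =>
        ∀ j, (univ.filter fun a => f a = j).card = lam j),
      (algebraMap (MvPolynomial (Fin n) ℂ) (FractionRing (MvPolynomial (Fin n) ℂ))
        (Rpoly N n f))⁻¹ = 0 :=
  stmt2_general N n lam hpos
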